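/- Under the assumptions: L is symmetric, satisfies the triangle inequality, and is k-Lipschitz in its second argument; f₀ satisfies |f₀(x₁) − f₀(x₂)| ≤ M for all x₁, x₂; f₀ together with the optimal coupling π* between P_T̂ and P_T is φ-Lipschitz transferable; and α = kλ. Then |err_T̂(y, f₀) − err_T(y, f₀)| ≤ W(P_T̂, P_T) + kM φ(λ), where W(P_T̂, P_T) = inf_π ∫ [α d(x₁, x₂) + L(y₁, y₂)] dπ((x₁,y₁),(x₂,y₂)). -/

import Mathlib

open MeasureTheory

/-- A coupling of two probability measures on `Z`. -/
def IsCoupling {Z : Type*} [MeasurableSpace Z]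
    (π : Measure (Z × Z)) (μ ν : Measure Z) : Prop :=
  π.map Prod.fst = μ ∧ π.map Prod.snd = ν

/-! Couple the two samples by the optimal plan `π*`. By symmetry, the triangle inequality and
`k`-Lipschitzness, `|L(y₁, f₀ x₁) − L(y₂, f₀ x₂)| ≤ L(y₁, y₂) + k |f₀ x₁ − f₀ x₂|`. Off the set
where `(f₀, π*)` fails to be `λ`-Lipschitz, the last term is at most `kλ d(x₁, x₂) = α d(x₁, x₂)`;
on it, at most `kM`. Integrating against `π*` bounds the difference of risks by the transport
cost of `π*`, which is `W(P_T̂, P_T)`, plus `kM` times the mass of the bad set. -/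

lemma abs_sub_le_add_mul_abs_sub {L : ℝ → ℝ → ℝ} {k : ℝ}
    (hsym : ∀ y₁ y₂, L y₁ y₂ = L y₂ y₁)
    (htri : ∀ y₁ y₂ y₃, L y₁ y₃ ≤ L y₁ y₂ + L y₂ y₃)
    (hlip : ∀ y₁ y₂ y₃, |L y₁ y₂ - L y₁ y₃| ≤ k * |y₂ - y₃|) (y₁ y₂ a b : ℝ) :
    |L y₁ a - L y₂ b| ≤ L y₁ y₂ + k * |a - b| := by
  rw [abs_sub_le_iff]
  constructor
  · have := (le_abs_self _).trans (hlip y₂ a b)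
    linarith [htri y₁ y₂ a]
  · have := (le_abs_self _).trans (hlip y₁ b a)
    rw [abs_sub_comm a b]
    linarith [htri y₂ y₁ b, hsym y₁ y₂]

lemma mul_le_mul_add_indicator {Z : Type*} {B : Set Z} {u v : Z → ℝ} {k lam M : ℝ}
    (hk : 0 ≤ k) (hlam : 0 ≤ lam) (hM : 0 ≤ M) (hv : ∀ z, 0 ≤ v z) (hu : ∀ z, u z ≤ M)
    (hB : {z | lam * v z < u z} ⊆ B) (z : Z) :
    k * u z ≤ k * lam * v z + B.indicator (fun _ => k * M) z := by
  by_cases hz : lam * v z < u z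
  · rw [Set.indicator_of_mem (hB hz)]
    nlinarith [mul_nonneg (mul_nonneg hk hlam) (hv z), hu z]
  · have : 0 ≤ B.indicator (fun _ => k * M) z :=
      Set.indicator_nonneg (fun _ _ => mul_nonneg hk hM) z
    nlinarith [not_lt.mp hz]

namespace IsCoupling

variable {Z : Type*} [MeasurableSpace Z] {π : Measure (Z × Z)} {μ ν : Measure Z}

lemma integral_comp_fst (hπ : IsCoupling π μ ν) {f : Z → ℝ} (hf : AEStronglyMeasurable f μ) :
    ∫ z, f z.1 ∂π = ∫ z, f z ∂μ := by
  rw [← hπ.1] at hf ⊢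
  exact (integral_map measurable_fst.aemeasurable hf).symm

lemma integral_comp_snd (hπ : IsCoupling π μ ν) {g : Z → ℝ} (hg : AEStronglyMeasurable g ν) :
    ∫ z, g z.2 ∂π = ∫ z, g z ∂ν := by
  rw [← hπ.2] at hg ⊢
  exact (integral_map measurable_snd.aemeasurable hg).symm

lemma abs_integral_sub_le (hπ : IsCoupling π μ ν) {f g : Z → ℝ} {c : Z × Z → ℝ}
    (hf : Integrable f μ) (hg : Integrable g ν) (hc : Integrable c π)
    (hfg : ∀ z, |f z.1 - g z.2| ≤ c z) :
    |∫ z, f z ∂μ - ∫ z, g z ∂ν| ≤ ∫ z, c z ∂π := by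
  have hf' : Integrable (fun z => f z.1) π :=
    (hπ.1 ▸ hf).comp_measurable measurable_fst
  have hg' : Integrable (fun z => g z.2) π :=
    (hπ.2 ▸ hg).comp_measurable measurable_snd
  rw [← hπ.integral_comp_fst hf.1, ← hπ.integral_comp_snd hg.1, ← integral_sub hf' hg']
  exact abs_integral_le_integral_abs.trans (integral_mono (hf'.sub hg').abs hc hfg)

end IsCoupling

theorem stmt_8_general {X : Type*} [MeasurableSpace X] [MetricSpace X]
    (PThat PT : Measure (X × ℝ)) [IsProbabilityMeasure PThat] [IsProbabilityMeasure PT]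
    (L : ℝ → ℝ → ℝ)
    (hsym : ∀ y₁ y₂, L y₁ y₂ = L y₂ y₁)
    (htri : ∀ y₁ y₂ y₃, L y₁ y₃ ≤ L y₁ y₂ + L y₂ y₃)
    (k lam α M : ℝ) (hk : 0 ≤ k) (hlam : 0 < lam) (hM : 0 ≤ M) (hα : α = k * lam)
    (hlip : ∀ y₁ y₂ y₃, |L y₁ y₂ - L y₁ y₃| ≤ k * |y₂ - y₃|)
    (f₀ : X → ℝ)
    (hbd : ∀ x₁ x₂ : X, |f₀ x₁ - f₀ x₂| ≤ M)
    (φlam : ℝ)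
    (πstar : Measure ((X × ℝ) × (X × ℝ))) [IsProbabilityMeasure πstar]
    (hcoupling : IsCoupling πstar PThat PT)
    -- π* is an optimal coupling: it attains the OT cost W(P_T̂, P_T)
    (hopt : (∫ z : (X × ℝ) × (X × ℝ), (α * dist z.1.1 z.2.1 + L z.1.2 z.2.2) ∂πstar)
        = sInf {r : ℝ | ∃ π : Measure ((X × ℝ) × (X × ℝ)),
            IsProbabilityMeasure π ∧ IsCoupling π PThat PT ∧
            r = ∫ z : (X × ℝ) × (X × ℝ), (α * dist z.1.1 z.2.1 + L z.1.2 z.2.2) ∂π})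
    -- probabilistic transfer Lipschitzness of (f₀, π*) at level λ
    (hPTL : (πstar {z : (X × ℝ) × (X × ℝ) |
        lam * dist z.1.1 z.2.1 < |f₀ z.1.1 - f₀ z.2.1|}).toReal ≤ φlam)
    (hint1 : Integrable (fun z : X × ℝ => L z.2 (f₀ z.1)) PThat)
    (hint2 : Integrable (fun z : X × ℝ => L z.2 (f₀ z.1)) PT)
    (hint3 : Integrable (fun z : (X × ℝ) × (X × ℝ) =>
        α * dist z.1.1 z.2.1 + L z.1.2 z.2.2) πstar) :
    |(∫ z, L z.2 (f₀ z.1) ∂PThat) - (∫ z, L z.2 (f₀ z.1) ∂PT)|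
      ≤ sInf {r : ℝ | ∃ π : Measure ((X × ℝ) × (X × ℝ)),
            IsProbabilityMeasure π ∧ IsCoupling π PThat PT ∧
            r = ∫ z : (X × ℝ) × (X × ℝ), (α * dist z.1.1 z.2.1 + L z.1.2 z.2.2) ∂π}
        + k * M * φlam := by
  rw [← hopt]
  subst hα
  set A : Set ((X × ℝ) × (X × ℝ)) := {z | lam * dist z.1.1 z.2.1 < |f₀ z.1.1 - f₀ z.2.1|}
  -- `A` need not be measurable, so the penalty is charged on a measurable hull of the same mass.
  set B := toMeasurable πstar A
  have hB : MeasurableSet B := measurableSet_toMeasurable _ _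
  have hpen : Integrable (B.indicator fun _ => k * M) πstar :=
    (integrable_indicator_iff hB).2 (integrableOn_const (measure_ne_top _ _))
  have hpointwise (z : (X × ℝ) × (X × ℝ)) : |L z.1.2 (f₀ z.1.1) - L z.2.2 (f₀ z.2.1)|
      ≤ (k * lam * dist z.1.1 z.2.1 + L z.1.2 z.2.2) + B.indicator (fun _ => k * M) z := by
    have := mul_le_mul_add_indicator (u := fun z => |f₀ z.1.1 - f₀ z.2.1|) hk hlam.le hM
      (fun _ => dist_nonneg) (fun _ => hbd _ _) (subset_toMeasurable πstar A) z
    linarith [abs_sub_le_add_mul_abs_sub hsym htri hlip z.1.2 z.2.2 (f₀ z.1.1) (f₀ z.2.1)]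
  calc _ ≤ _ := hcoupling.abs_integral_sub_le hint1 hint2 (hint3.add hpen) hpointwise
    _ = (∫ z, (k * lam * dist z.1.1 z.2.1 + L z.1.2 z.2.2) ∂πstar)
          + πstar.real A * (k * M) := by
      rw [integral_add' hint3 hpen, integral_indicator_const _ hB, smul_eq_mul,
        measureReal_def, measure_toMeasurable, ← measureReal_def]
    _ ≤ _ := by nlinarith [mul_nonneg hk hM, (show πstar.real A ≤ φlam from hPTL)]

/-- under symmetry, triangle inequality and `k`-Lipschitzness of the
loss, a uniform bound `M` on the oscillation of `f₀`, probabilistic transfer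
Lipschitzness of `(f₀, π*)` for the optimal coupling `π*`, and `α = kλ`,
`|err_T̂(y, f₀) − err_T(y, f₀)| ≤ W(P_T̂, P_T) + kMφ(λ)`, where `W` is the OT
cost with ground cost `α d(x₁,x₂) + L(y₁,y₂)`. -/
theorem stmt_8 {X : Type*} [MeasurableSpace X] [MetricSpace X]
    (PThat PT : Measure (X × ℝ)) [IsProbabilityMeasure PThat] [IsProbabilityMeasure PT]
    (L : ℝ → ℝ → ℝ)
    (hnonneg : ∀ y₁ y₂, 0 ≤ L y₁ y₂)
    (hsym : ∀ y₁ y₂, L y₁ y₂ = L y₂ y₁)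
    (htri : ∀ y₁ y₂ y₃, L y₁ y₃ ≤ L y₁ y₂ + L y₂ y₃)
    (k lam α M : ℝ) (hk : 0 ≤ k) (hlam : 0 < lam) (hM : 0 ≤ M) (hα : α = k * lam)
    (hlip : ∀ y₁ y₂ y₃, |L y₁ y₂ - L y₁ y₃| ≤ k * |y₂ - y₃|)
    (f₀ : X → ℝ)
    (hbd : ∀ x₁ x₂ : X, |f₀ x₁ - f₀ x₂| ≤ M)
    (φlam : ℝ)
    (πstar : Measure ((X × ℝ) × (X × ℝ))) [IsProbabilityMeasure πstar]
    (hcoupling : IsCoupling πstar PThat PT)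
    -- π* is an optimal coupling: it attains the OT cost W(P_T̂, P_T)
    (hopt : (∫ z : (X × ℝ) × (X × ℝ), (α * dist z.1.1 z.2.1 + L z.1.2 z.2.2) ∂πstar)
        = sInf {r : ℝ | ∃ π : Measure ((X × ℝ) × (X × ℝ)),
            IsProbabilityMeasure π ∧ IsCoupling π PThat PT ∧
            r = ∫ z : (X × ℝ) × (X × ℝ), (α * dist z.1.1 z.2.1 + L z.1.2 z.2.2) ∂π})
    -- probabilistic transfer Lipschitzness of (f₀, π*) at level λ
    (hPTL : (πstar {z : (X × ℝ) × (X × ℝ) |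
        lam * dist z.1.1 z.2.1 < |f₀ z.1.1 - f₀ z.2.1|}).toReal ≤ φlam)
    (hint1 : Integrable (fun z : X × ℝ => L z.2 (f₀ z.1)) PThat)
    (hint2 : Integrable (fun z : X × ℝ => L z.2 (f₀ z.1)) PT)
    (hint3 : Integrable (fun z : (X × ℝ) × (X × ℝ) =>
        α * dist z.1.1 z.2.1 + L z.1.2 z.2.2) πstar) :
    |(∫ z, L z.2 (f₀ z.1) ∂PThat) - (∫ z, L z.2 (f₀ z.1) ∂PT)|
      ≤ sInf {r : ℝ | ∃ π : Measure ((X × ℝ) × (X × ℝ)),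
            IsProbabilityMeasure π ∧ IsCoupling π PThat PT ∧
            r = ∫ z : (X × ℝ) × (X × ℝ), (α * dist z.1.1 z.2.1 + L z.1.2 z.2.2) ∂π}
        + k * M * φlam :=
  stmt_8_general PThat PT L hsym htri k lam α M hk hlam hM hα hlip f₀ hbd φlam πstar hcoupling hopt
    hPTL hint1 hint2 hint3
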